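/- In S△(2,2) over ℚ at q = 1 with λ = (2,0) and B = e_λ S△(2,2) e_λ, the right B-module e_λ S△(2,2) is free of rank 4 with basis {e_{E△_{1,1}+E△_{1,2}}, e_{E△_{1,2}+E△_{1,3}}, e_{2E△_{1,1}}, e_{2E△_{1,2}}}, and similarly S△(2,2) e_λ is free of rank 4 as a right B-module with basis {e_{E△_{1,1}+E△_{2,1}}, e_{E△_{2,1}+E△_{3,1}}, e_{2E△_{1,1}}, e_{2E△_{2,1}}}. -/

import Mathlib

noncomputable section

/-- The row vector `row(A) = (Σ_j a_{i,j})_i` of a `ℤ×ℤ` matrix with entries in `ℕ`. -/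
def rowS (A : ℤ → ℤ → ℕ) (i : ℤ) : ℕ := ∑ᶠ j, A i j

/-- The column vector `col(A) = (Σ_i a_{i,j})_j`. -/
def colS (A : ℤ → ℤ → ℕ) (j : ℤ) : ℕ := ∑ᶠ i, A i j

/-- `Θ△(n,r)`: the set of `ℤ×ℤ` matrices over `ℕ` with `a_{i,j} = a_{i+n,j+n}`, finitely
many nonzero entries in each row and column, and total entry sum `r` over `n` consecutive
rows (equivalently columns). -/
def ThetaAff (n r : ℕ) : Set (ℤ → ℤ → ℕ) :=
  {A | (∀ i j, A (i + n) (j + n) = A i j) ∧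
       (∀ i, (Function.support (A i)).Finite) ∧
       (∀ j, (Function.support fun i => A i j).Finite) ∧
       (∑ i ∈ Finset.Icc (1 : ℤ) (n : ℤ), rowS A i) = r ∧
       (∑ j ∈ Finset.Icc (1 : ℤ) (n : ℤ), colS A j) = r}

/-- `Λ△(n,r)`: `n`-periodic sequences of natural numbers summing to `r` over a period. -/
def LambdaAff (n r : ℕ) : Set (ℤ → ℕ) :=
  {l | (∀ i, l (i + n) = l i) ∧ (∑ i ∈ Finset.Icc (1 : ℤ) (n : ℤ), l i) = r}

/-- The diagonal matrix `diag(λ)` attached to `λ ∈ Λ△(n,r)`. -/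
def diagM (l : ℤ → ℕ) : ℤ → ℤ → ℕ := fun i j => if i = j then l i else 0

/-- The `n`-periodic elementary matrix `E△_{i,j}`, with `1` at the positions
`(i + sn, j + sn)`, `s ∈ ℤ`. -/
def Edel (n : ℕ) (i j : ℤ) : ℤ → ℤ → ℕ :=
  fun x y => if x - i = y - j ∧ (n : ℤ) ∣ (x - i) then 1 else 0

/-- `Λ(∞, m)`: finitely supported sequences `t : ℤ → ℕ` with `Σ t = m`. -/
def CompInf (m : ℕ) : Set (ℤ → ℕ) :=
  {t | (Function.support t).Finite ∧ ∑ᶠ u, t u = m}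

/-- `A + Σ_u t_u (E△_{h,u} - E△_{h+1,u})`. -/
def rowAdd (n : ℕ) (h : ℤ) (t : ℤ → ℕ) (A : ℤ → ℤ → ℕ) : ℤ → ℤ → ℕ :=
  fun x y => A x y + (if (n : ℤ) ∣ (x - h) then t (y - x + h) else 0)
               - (if (n : ℤ) ∣ (x - (h + 1)) then t (y - x + (h + 1)) else 0)

/-- `A - Σ_u t_u (E△_{h,u} - E△_{h+1,u})`. -/
def rowSub (n : ℕ) (h : ℤ) (t : ℤ → ℕ) (A : ℤ → ℤ → ℕ) : ℤ → ℤ → ℕ :=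
  fun x y => A x y + (if (n : ℤ) ∣ (x - (h + 1)) then t (y - x + (h + 1)) else 0)
               - (if (n : ℤ) ∣ (x - h) then t (y - x + h) else 0)

/-- `A + Σ_u t_u (E△_{u,h+1} - E△_{u,h})`. -/
def colAdd (n : ℕ) (h : ℤ) (t : ℤ → ℕ) (A : ℤ → ℤ → ℕ) : ℤ → ℤ → ℕ :=
  fun x y => A x y + (if (n : ℤ) ∣ (y - (h + 1)) then t (x - y + (h + 1)) else 0)
               - (if (n : ℤ) ∣ (y - h) then t (x - y + h) else 0)

/-- `A - Σ_u t_u (E△_{u,h+1} - E△_{u,h})`. -/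
def colSub (n : ℕ) (h : ℤ) (t : ℤ → ℕ) (A : ℤ → ℤ → ℕ) : ℤ → ℤ → ℕ :=
  fun x y => A x y + (if (n : ℤ) ∣ (y - h) then t (x - y + h) else 0)
               - (if (n : ℤ) ∣ (y - (h + 1)) then t (x - y + (h + 1)) else 0)

/-- An algebra `S` realizing the affine Schur algebra `S△(n,r)` over `ℚ` at `q = 1`:
it has a basis `{e_A : A ∈ Θ△(n,r)}` whose structure constants vanish unless
`col(A) = row(A')`, diagonal basis elements act as partial identities, and the transpose
of matrices induces an involutory anti-automorphism `τ`. -/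
structure AffineSchurAlg (n r : ℕ) (S : Type) [Ring S] [Algebra ℚ S] where
  /-- the basis elements `e_A` (extended by `0` off `Θ△(n,r)`) -/
  e : (ℤ → ℤ → ℕ) → S
  indep : LinearIndependent ℚ (fun A : ThetaAff n r => e A.1)
  span_eq_top : Submodule.span ℚ (e '' ThetaAff n r) = ⊤
  vanish : ∀ A, A ∉ ThetaAff n r → e A = 0
  mul_disjoint : ∀ A B, A ∈ ThetaAff n r → B ∈ ThetaAff n r →
    colS A ≠ rowS B → e A * e B = 0
  diag_row : ∀ A ∈ ThetaAff n r, e (diagM (rowS A)) * e A = e A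
  diag_col : ∀ A ∈ ThetaAff n r, e A * e (diagM (colS A)) = e A
  /-- the anti-involution `e_A ↦ e_{Aᵀ}` -/
  tau : S →ₗ[ℚ] S
  tau_mul : ∀ a b : S, tau (a * b) = tau b * tau a
  tau_invol : ∀ a : S, tau (tau a) = a
  tau_e : ∀ A, tau (e A) = e (fun x y => A y x)

/-- An algebra realizing the affine Schur algebra `S△(2,2)` over `ℚ` at `q = 1`,
together with the multiplication formulas of Lusztig and of Du–Deng–Fu
(Propositions 2.5, 2.6, 2.7 of the paper, for `n = 2`), and the shift formulas
(multiplication by `e_{2E△_{1,3}}` and `e_{2E△_{3,1}}`) coming from the Hecke-algebra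
description. -/
structure AffineSchur22 (S : Type) [Ring S] [Algebra ℚ S] extends
    AffineSchurAlg 2 2 S where
  /-- Proposition 2.5(1): multiplication by `e_{B_m}`,
  `B_m = diag(λ) + m E△_{h,h+1} - m E△_{h+1,h+1}`, `λ = row(A)`. -/
  lusztig_row_plus : ∀ (h : ℤ) (m : ℕ), ∀ A ∈ ThetaAff 2 2, m ≤ rowS A (h + 1) →
    e (fun x y => diagM (rowS A) x y + m * Edel 2 h (h + 1) x y
        - m * Edel 2 (h + 1) (h + 1) x y) * e A
      = ∑ᶠ t ∈ {t | t ∈ CompInf m ∧ ∀ u, t u ≤ A (h + 1) u},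
          ((∏ᶠ u, Nat.choose (A h u + t u) (t u) : ℕ) : ℚ) • e (rowAdd 2 h t A)
  /-- Proposition 2.5(2): multiplication by `e_{C_m}`,
  `C_m = diag(λ) - m E△_{h,h} + m E△_{h+1,h}`, `λ = row(A)`. -/
  lusztig_row_minus : ∀ (h : ℤ) (m : ℕ), ∀ A ∈ ThetaAff 2 2, m ≤ rowS A h →
    e (fun x y => diagM (rowS A) x y - m * Edel 2 h h x y
        + m * Edel 2 (h + 1) h x y) * e A
      = ∑ᶠ t ∈ {t | t ∈ CompInf m ∧ ∀ u, t u ≤ A h u},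
          ((∏ᶠ u, Nat.choose (A (h + 1) u + t u) (t u) : ℕ) : ℚ) • e (rowSub 2 h t A)
  /-- Proposition 2.6(1): right multiplication by `e_{B_m}`,
  `B_m = diag(λ) + m E△_{h,h+1} - m E△_{h,h}`, `λ = col(A)`. -/
  lusztig_col_plus : ∀ (h : ℤ) (m : ℕ), ∀ A ∈ ThetaAff 2 2, m ≤ colS A h →
    e A * e (fun x y => diagM (colS A) x y + m * Edel 2 h (h + 1) x y
        - m * Edel 2 h h x y)
      = ∑ᶠ t ∈ {t | t ∈ CompInf m ∧ ∀ u, t u ≤ A u h},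
          ((∏ᶠ u, Nat.choose (A u (h + 1) + t u) (t u) : ℕ) : ℚ) • e (colAdd 2 h t A)
  /-- Proposition 2.6(2): right multiplication by `e_{C_m}`,
  `C_m = diag(λ) - m E△_{h+1,h+1} + m E△_{h+1,h}`, `λ = col(A)`. -/
  lusztig_col_minus : ∀ (h : ℤ) (m : ℕ), ∀ A ∈ ThetaAff 2 2, m ≤ colS A (h + 1) →
    e A * e (fun x y => diagM (colS A) x y - m * Edel 2 (h + 1) (h + 1) x y
        + m * Edel 2 (h + 1) h x y)
      = ∑ᶠ t ∈ {t | t ∈ CompInf m ∧ ∀ u, t u ≤ A u (h + 1)},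
          ((∏ᶠ u, Nat.choose (A u h + t u) (t u) : ℕ) : ℚ) • e (colSub 2 h t A)
  /-- Proposition 2.7: multiplication by `e_{D_m}`,
  `D_m = diag(λ) - E△_{h,h} + E△_{h,h+mn}`, `λ = row(A)`, `m ≠ 0`. -/
  lusztig_shift : ∀ (h : ℤ) (m : ℤ), m ≠ 0 → ∀ A ∈ ThetaAff 2 2, 1 ≤ rowS A h →
    e (fun x y => diagM (rowS A) x y - Edel 2 h h x y + Edel 2 h (h + 2 * m) x y) * e A
      = ∑ᶠ u ∈ {u : ℤ | 1 ≤ A h u},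
          ((A h (u + 2 * m) + 1 : ℕ) : ℚ) •
            e (fun x y => A x y + Edel 2 h (u + 2 * m) x y - Edel 2 h u x y)
  /-- multiplication by `e_{2E△_{1,3}}` shifts both column indices by `2`
  (Proposition 2.8 of the paper). -/
  x2_shift : ∀ i j : ℤ,
    e (fun x y => 2 * Edel 2 1 3 x y) * e (fun x y => Edel 2 1 i x y + Edel 2 1 j x y)
      = e (fun x y => Edel 2 1 (i + 2) x y + Edel 2 1 (j + 2) x y)
  /-- multiplication by `e_{2E△_{3,1}}` shifts both column indices by `-2`. -/
  x2inv_shift : ∀ i j : ℤ,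
    e (fun x y => 2 * Edel 2 3 1 x y) * e (fun x y => Edel 2 1 i x y + Edel 2 1 j x y)
      = e (fun x y => Edel 2 1 (i - 2) x y + Edel 2 1 (j - 2) x y)

/-- The weight `λ = (2,0) ∈ Λ△(2,2)`. -/
def lam0 : ℤ → ℕ := fun i => if (2 : ℤ) ∣ (i - 1) then 2 else 0

/-- The weight `μ = (0,2) ∈ Λ△(2,2)`. -/
def mu0 : ℤ → ℕ := fun i => if (2 : ℤ) ∣ (i - 2) then 2 else 0

/-- The weight `ν = (1,1) ∈ Λ△(2,2)`. -/
def nu0 : ℤ → ℕ := fun _ => 1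

/-- The matrix `E△_{i,j} + E△_{k,l}` (for `n = 2`). -/
def Mat2 (i j k l : ℤ) : ℤ → ℤ → ℕ := fun x y => Edel 2 i j x y + Edel 2 k l x y

end

/-!
Write `e_(p,q)` for `e_{E△_{1,p} + E△_{1,q}}` (`Mat2 1 p 1 q`). These elements form a basis of
`e_λ S`, and those with `p, q` odd form a basis of `B`. Lusztig's column formulas give, for `a, c`
odd, `e_(a,c) π₁ = Σ_{p ∈ {a,c}} e_(p+1, a+c-p)`, the same with `p - 1` for
`w = e_(1,0) = e_(-1,-1) π₂`, and `e_(a,c) π₄ = e_(a+1,c+1)`. So the odd–odd `e_(p,q)` are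
`B`-multiples of `π₃ = e_λ`, the even–even ones of `π₄`, and the mixed ones follow by induction
on `|p - q|`.

For uniqueness, right multiplication by `e_λ` and by `e_{2E△_{2,1}}` isolates the `π₃`- and
`π₄`-components (`π₄ e_{2E△_{2,1}} = e_λ`). Since `π₂ = e_(3,3) w`, what is left is a relation
`d₀ π₁ + d₁ w = 0`, which on coefficients reads `c₀(p,q) + c₁(p,q+2) = 0` for odd `p, q`. As
`c₀(p,q) = c₀(q,p)`, the coefficients `c₁` are invariant under `(p,q) ↦ (p+2,q-2)`, hence vanish
because they have finite support. The anti-involution `τ` transports everything to `S e_λ`.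
-/

open Function

lemma Edel_two_add_two (a i x y : ℤ) : Edel 2 a i (x + 2) (y + 2) = Edel 2 a i x y := by
  simp only [Edel]
  split_ifs <;> omega

lemma finsum_Edel_row (a i x : ℤ) :
    ∑ᶠ y, Edel 2 a i x y = if (2 : ℤ) ∣ x - a then 1 else 0 := by
  split_ifs with h
  · rw [finsum_eq_single _ (x - a + i) fun y hy => by simp only [Edel]; split_ifs <;> omega]
    simp only [Edel]; split_ifs <;> omega
  · exact finsum_eq_zero_of_forall_eq_zero fun y => by simp only [Edel]; split_ifs <;> omega

lemma finsum_Edel_col (a i y : ℤ) :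
    ∑ᶠ x, Edel 2 a i x y = if (2 : ℤ) ∣ y - i then 1 else 0 := by
  split_ifs with h
  · rw [finsum_eq_single _ (y - i + a) fun x hx => by simp only [Edel]; split_ifs <;> omega]
    simp only [Edel]; split_ifs <;> omega
  · exact finsum_eq_zero_of_forall_eq_zero fun x => by simp only [Edel]; split_ifs <;> omega

lemma finite_support_Edel_row (a i x : ℤ) : (support fun y => Edel 2 a i x y).Finite :=
  (Set.finite_singleton (x - a + i)).subset fun y hy => by
    simp only [mem_support, Edel] at hy
    split_ifs at hy
    · simp only [Set.mem_singleton_iff]; omega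
    · exact absurd rfl hy

lemma finite_support_Edel_col (a i y : ℤ) : (support fun x => Edel 2 a i x y).Finite :=
  (Set.finite_singleton (y - i + a)).subset fun x hx => by
    simp only [mem_support, Edel] at hx
    split_ifs at hx
    · simp only [Set.mem_singleton_iff]; omega
    · exact absurd rfl hx

lemma Mat2_comm (i j : ℤ) : Mat2 1 i 1 j = Mat2 1 j 1 i := by
  funext x y; simp only [Mat2]; omega

lemma two_mul_Edel (i j : ℤ) : (fun x y => 2 * Edel 2 i j x y) = Mat2 i j i j := by
  funext x y; simp only [Mat2]; ring

lemma rowS_Mat2 (p i q j : ℤ) : rowS (Mat2 p i q j) =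
    fun x => (if (2 : ℤ) ∣ x - p then 1 else 0) + (if (2 : ℤ) ∣ x - q then 1 else 0) := by
  funext x
  rw [rowS, ← finsum_Edel_row p i, ← finsum_Edel_row q j,
    ← finsum_add_distrib (finite_support_Edel_row p i x) (finite_support_Edel_row q j x)]
  rfl

lemma colS_Mat2 (p i q j : ℤ) : colS (Mat2 p i q j) =
    fun y => (if (2 : ℤ) ∣ y - i then 1 else 0) + (if (2 : ℤ) ∣ y - j then 1 else 0) := by
  funext y
  rw [colS, ← finsum_Edel_col p i, ← finsum_Edel_col q j,
    ← finsum_add_distrib (finite_support_Edel_col p i y) (finite_support_Edel_col q j y)]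
  rfl

lemma Mat2_mem_ThetaAff (p i q j : ℤ) : Mat2 p i q j ∈ ThetaAff 2 2 := by
  have hIcc : Finset.Icc (1 : ℤ) ((2 : ℕ) : ℤ) = {1, 2} := rfl
  refine ⟨fun x y => ?_, fun x => ?_, fun y => ?_, ?_, ?_⟩
  · simp only [Mat2, Nat.cast_ofNat, Edel_two_add_two]
  · refine ((finite_support_Edel_row p i x).union (finite_support_Edel_row q j x)).subset ?_
    intro y hy
    simp only [mem_support, Mat2, Set.mem_union] at hy ⊢
    omega
  · refine ((finite_support_Edel_col p i y).union (finite_support_Edel_col q j y)).subset ?_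
    intro x hx
    simp only [mem_support, Mat2, Set.mem_union] at hx ⊢
    omega
  · rw [hIcc, rowS_Mat2, Finset.sum_pair (by decide)]
    split_ifs <;> omega
  · rw [hIcc, colS_Mat2, Finset.sum_pair (by decide)]
    split_ifs <;> omega

lemma Mat2_one_apply_one (p q y : ℤ) :
    Mat2 1 p 1 q 1 y = (if y = p then 1 else 0) + (if y = q then 1 else 0) := by
  simp only [Mat2, Edel]
  split_ifs <;> omega

lemma Mat2_eq_Mat2_iff {p q r s : ℤ} :
    Mat2 1 p 1 q = Mat2 1 r 1 s ↔ (p = r ∧ q = s) ∨ (p = s ∧ q = r) := by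
  refine ⟨fun h => ?_, ?_⟩
  · have hrow : ∀ y, Mat2 1 p 1 q 1 y = Mat2 1 r 1 s 1 y := fun y => by rw [h]
    have hp := hrow p
    have hq := hrow q
    have hr := hrow r
    simp only [Mat2_one_apply_one, if_pos] at hp hq hr
    split_ifs at hp hq hr <;> omega
  · rintro (⟨rfl, rfl⟩ | ⟨rfl, rfl⟩)
    · rfl
    · exact Mat2_comm _ _

lemma apply_add_mul_of_mem_ThetaAff {n r : ℕ} {A : ℤ → ℤ → ℕ} (hA : A ∈ ThetaAff n r)
    (k x y : ℤ) : A (x + n * k) (y + n * k) = A x y := by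
  induction k using Int.induction_on generalizing x y with
  | zero => simp
  | succ k ih => rw [mul_add_one, ← add_assoc, ← add_assoc, hA.1, ih]
  | pred k ih =>
    rw [← ih x y, ← hA.1]
    congr 1 <;> ring

lemma diagM_lam0 : diagM lam0 = Mat2 1 1 1 1 := by
  funext x y
  simp only [diagM, Mat2, Edel, lam0]
  split_ifs <;> omega

lemma rowS_diagM (l : ℤ → ℕ) : rowS (diagM l) = l := by
  funext x
  rw [rowS, finsum_eq_single (fun y => diagM l x y) x fun y hy => if_neg (Ne.symm hy)]
  exact if_pos rfl

lemma colS_diagM (l : ℤ → ℕ) : colS (diagM l) = l := by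
  funext y
  rw [colS, finsum_eq_single (fun x => diagM l x y) y fun x hx => if_neg hx]
  exact if_pos rfl

lemma rowS_Mat2_one (i j : ℤ) : rowS (Mat2 1 i 1 j) = lam0 := by
  rw [rowS_Mat2]; funext x; simp only [lam0]; split_ifs <;> omega

lemma colS_Mat2_one_of_odd {a c : ℤ} (ha : Odd a) (hc : Odd c) :
    colS (Mat2 1 a 1 c) = lam0 := by
  rw [Int.odd_iff] at ha hc
  rw [colS_Mat2]; funext y; simp only [lam0]; split_ifs <;> omega

section FiniteSupport

variable {α : Type*}

lemma eq_of_le_of_finsum_eq {t g : α → ℕ} (hg : (support g).Finite) (hle : ∀ u, t u ≤ g u)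
    (hsum : ∑ᶠ u, t u = ∑ᶠ u, g u) : t = g := by
  have hsub : ∀ {f : α → ℕ}, (∀ u, f u ≤ g u) → (support f).Finite := fun hf =>
    hg.subset fun u hu => by simp only [mem_support] at hu ⊢; have := hf u; omega
  have hd : (support (g - t)).Finite := hsub fun u => Nat.sub_le _ _
  have hsplit : ∑ᶠ u, g u = ∑ᶠ u, t u + ∑ᶠ u, (g - t) u := by
    rw [← finsum_add_distrib (hsub hle) hd]
    exact finsum_congr fun u => by simp only [Pi.sub_apply]; have := hle u; omega
  funext u
  have := single_le_finsum u hd fun _ => Nat.zero_le _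
  have := hle u
  simp only [Pi.sub_apply] at *
  omega

variable [DecidableEq α]

lemma finsum_single_one (p : α) : ∑ᶠ u, (Pi.single p 1 : α → ℕ) u = 1 := by
  rw [finsum_eq_single _ p fun u hu => Pi.single_eq_of_ne hu _, Pi.single_eq_same]

lemma finite_support_single_one (p : α) : (support (Pi.single p 1 : α → ℕ)).Finite :=
  (Set.finite_singleton p).subset fun u hu => by
    by_contra h; exact hu (Pi.single_eq_of_ne h _)

lemma eq_single_of_finsum_eq_one {f : α → ℕ} (hf : (support f).Finite)
    (h : ∑ᶠ u, f u = 1) : ∃ p, f = Pi.single p 1 := by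
  obtain ⟨p, hp⟩ : ∃ p, f p ≠ 0 := by
    by_contra! h0; rw [finsum_eq_zero_of_forall_eq_zero h0] at h; omega
  refine ⟨p, (eq_of_le_of_finsum_eq hf (fun u => ?_) (by rw [h, finsum_single_one])).symm⟩
  rw [Pi.single_apply]; split_ifs with hu
  · subst hu; omega
  · exact Nat.zero_le _

lemma eq_single_add_single_of_finsum_eq_two {f : α → ℕ} (hf : (support f).Finite)
    (h : ∑ᶠ u, f u = 2) : ∃ p q, f = Pi.single p 1 + Pi.single q 1 := by
  obtain ⟨p, hp⟩ : ∃ p, f p ≠ 0 := by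
    by_contra! h0; rw [finsum_eq_zero_of_forall_eq_zero h0] at h; omega
  have hsplit : f = (f - Pi.single p 1) + Pi.single p 1 := by
    funext u
    simp only [Pi.add_apply, Pi.sub_apply, Pi.single_apply]
    split_ifs with hu
    · subst hu; omega
    · omega
  have hrest : (support (f - Pi.single p 1)).Finite :=
    hf.subset fun u hu => by simp only [mem_support, Pi.sub_apply] at hu ⊢; omega
  have hf' : ∑ᶠ u, f u = ∑ᶠ u, ((f - Pi.single p 1 : α → ℕ) u + (Pi.single p 1 : α → ℕ) u) :=
    finsum_congr fun u => by rw [← Pi.add_apply, ← hsplit]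
  rw [hf', finsum_add_distrib hrest (finite_support_single_one p), finsum_single_one] at h
  obtain ⟨q, hq⟩ := eq_single_of_finsum_eq_one hrest (by omega)
  exact ⟨q, p, hq ▸ hsplit⟩

end FiniteSupport

lemma Finsupp.eq_zero_of_injective_of_apply_eq {α M : Type*} [Zero M] (f : α →₀ M) {g : ℕ → α}
    (hg : Injective g) {m : M} (h : ∀ k, f (g k) = m) : m = 0 := by
  by_contra hm
  refine Set.infinite_of_injective_forall_mem hg (fun k => ?_) f.support.finite_toSet
  rw [Finset.mem_coe, Finsupp.mem_support_iff, h k]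
  exact hm

lemma setOf_mem_compInf_one_le (g : ℤ → ℕ) :
    {t | t ∈ CompInf 1 ∧ ∀ u, t u ≤ g u} = (fun p => Pi.single p 1) '' support g := by
  ext t
  constructor
  · rintro ⟨⟨ht, hsum⟩, hle⟩
    obtain ⟨p, rfl⟩ := eq_single_of_finsum_eq_one ht hsum
    have := hle p
    simp only [Pi.single_eq_same] at this
    exact ⟨p, by simp only [mem_support]; omega, rfl⟩
  · rintro ⟨p, hp, rfl⟩
    dsimp only
    refine ⟨⟨finite_support_single_one p, finsum_single_one p⟩, fun u => ?_⟩
    rw [Pi.single_apply]; split_ifs with hu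
    · subst hu; simp only [mem_support] at hp; omega
    · exact Nat.zero_le _

lemma setOf_mem_compInf_le_of_finsum_eq {g : ℤ → ℕ} {m : ℕ} (hg : (support g).Finite)
    (hm : ∑ᶠ u, g u = m) : {t | t ∈ CompInf m ∧ ∀ u, t u ≤ g u} = {g} := by
  ext t
  constructor
  · rintro ⟨⟨-, hsum⟩, hle⟩
    exact eq_of_le_of_finsum_eq hg hle (hsum.trans hm.symm)
  · rintro rfl
    exact ⟨⟨hg, hm⟩, fun _ => le_rfl⟩

lemma exists_Mat2_of_rowS_eq_lam0 {A : ℤ → ℤ → ℕ} (hA : A ∈ ThetaAff 2 2)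
    (hrow : rowS A = lam0) : ∃ i j, A = Mat2 1 i 1 j := by
  have hrow' : ∀ x, ∑ᶠ y, A x y = lam0 x := fun x => congrFun hrow x
  have hA2 : ∀ y, A 2 y = 0 := fun y => by
    have := single_le_finsum y (hA.2.1 2) fun _ => Nat.zero_le _
    rw [hrow' 2] at this
    simpa [lam0] using this
  obtain ⟨i, j, hA1⟩ := eq_single_add_single_of_finsum_eq_two (hA.2.1 1) (by simp [hrow', lam0])
  refine ⟨i, j, funext fun x => funext fun y => ?_⟩
  obtain ⟨k, hk | hk⟩ := Int.even_or_odd' x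
  · have := apply_add_mul_of_mem_ThetaAff hA (k - 1) 2 (y - x + 2)
    rw [show (2 : ℤ) + (2 : ℕ) * (k - 1) = x by omega,
      show y - x + 2 + (2 : ℕ) * (k - 1) = y by omega, hA2] at this
    rw [this]
    simp only [Mat2, Edel]; split_ifs <;> omega
  · have := apply_add_mul_of_mem_ThetaAff hA k 1 (y - x + 1)
    rw [show (1 : ℤ) + (2 : ℕ) * k = x by omega,
      show y - x + 1 + (2 : ℕ) * k = y by omega, hA1] at this
    rw [this]
    simp only [Mat2, Edel, Pi.add_apply, Pi.single_apply]; split_ifs <;> omega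

lemma exists_odd_Mat2_of_rowS_colS_eq_lam0 {A : ℤ → ℤ → ℕ} (hA : A ∈ ThetaAff 2 2)
    (hrow : rowS A = lam0) (hcol : colS A = lam0) :
    ∃ a c, Odd a ∧ Odd c ∧ A = Mat2 1 a 1 c := by
  obtain ⟨a, c, rfl⟩ := exists_Mat2_of_rowS_eq_lam0 hA hrow
  rw [colS_Mat2] at hcol
  have ha := congrFun hcol a
  have hc := congrFun hcol c
  simp only [lam0] at ha hc
  refine ⟨a, c, ?_, ?_, rfl⟩ <;> rw [Int.odd_iff] <;> split_ifs at ha hc <;> omega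

lemma IsIdempotentElem.mem_corner_iff_mul_mul {A : Type*} [NonUnitalRing A] {e b : A}
    (idem : IsIdempotentElem e) : b ∈ NonUnitalRing.corner e ↔ e * b * e = b := by
  refine ⟨fun hb => ?_, fun hb => ⟨b, hb⟩⟩
  obtain ⟨hl, hr⟩ := (Subsemigroup.mem_corner_iff idem).1 hb
  rw [hl, hr]

section Corner

variable {R A : Type*} [CommRing R] [Ring A] [Algebra R A] {e : A}

lemma smul_mem_corner (r : R) {b : A} (hb : b ∈ NonUnitalRing.corner e) :
    r • b ∈ NonUnitalRing.corner e := by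
  obtain ⟨a, rfl⟩ := hb
  exact ⟨r • a, by simp only [mul_smul_comm, smul_mul_assoc]⟩

variable (R) {ι : Type*} [Fintype ι]

def cornerSpan (e : A) (v : ι → A) : Submodule R A where
  carrier := {x | ∃ b : ι → A, (∀ i, b i ∈ NonUnitalRing.corner e) ∧ x = ∑ i, b i * v i}
  add_mem' := by
    rintro _ _ ⟨b, hb, rfl⟩ ⟨c, hc, rfl⟩
    exact ⟨b + c, fun i => add_mem (hb i) (hc i), by simp only [Pi.add_apply, add_mul,
      Finset.sum_add_distrib]⟩
  zero_mem' := ⟨0, fun _ => zero_mem _, by simp⟩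
  smul_mem' := by
    rintro r _ ⟨b, hb, rfl⟩
    exact ⟨r • b, fun i => smul_mem_corner r (hb i), by simp only [Finset.smul_sum,
      Pi.smul_apply, smul_mul_assoc]⟩

variable {R}

lemma mul_mem_cornerSpan (v : ι → A) [DecidableEq ι] {b : A} (hb : b ∈ NonUnitalRing.corner e)
    (i : ι) : b * v i ∈ cornerSpan R e v :=
  ⟨Pi.single i b, fun j => by rw [Pi.single_apply]; split_ifs; exacts [hb, zero_mem _],
    by simp [Pi.single_apply]⟩

end Corner

namespace AffineSchur22

variable {S : Type} [Ring S] [Algebra ℚ S] (H : AffineSchur22 S)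

abbrev corner : NonUnitalSubring S := NonUnitalRing.corner (H.e (diagM lam0))

lemma isIdempotentElem_e_lam0 : IsIdempotentElem (H.e (diagM lam0)) := by
  have := H.diag_row (diagM lam0) (diagM_lam0 ▸ Mat2_mem_ThetaAff 1 1 1 1)
  rwa [rowS_diagM] at this

lemma e_lam0_mul_e_Mat2 (i j : ℤ) :
    H.e (diagM lam0) * H.e (Mat2 1 i 1 j) = H.e (Mat2 1 i 1 j) := by
  simpa only [rowS_Mat2_one] using H.diag_row _ (Mat2_mem_ThetaAff 1 i 1 j)

lemma e_Mat2_mul_e_lam0 {a c : ℤ} (ha : Odd a) (hc : Odd c) :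
    H.e (Mat2 1 a 1 c) * H.e (diagM lam0) = H.e (Mat2 1 a 1 c) := by
  simpa only [colS_Mat2_one_of_odd ha hc] using H.diag_col _ (Mat2_mem_ThetaAff 1 a 1 c)

lemma e_Mat2_mem_corner {a c : ℤ} (ha : Odd a) (hc : Odd c) : H.e (Mat2 1 a 1 c) ∈ H.corner :=
  H.isIdempotentElem_e_lam0.mem_corner_iff_mul_mul.2 <| by
    rw [e_lam0_mul_e_Mat2, e_Mat2_mul_e_lam0 H ha hc]

lemma e_Mat2_mul_e_Mat2_eq_zero {p i q j r k s l : ℤ} (y : ℤ)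
    (hy : colS (Mat2 p i q j) y ≠ rowS (Mat2 r k s l) y) :
    H.e (Mat2 p i q j) * H.e (Mat2 r k s l) = 0 :=
  H.mul_disjoint _ _ (Mat2_mem_ThetaAff ..) (Mat2_mem_ThetaAff ..) fun h => hy (congrFun h y)

lemma e_Mat2_mul_e_lam0_eq_zero {i j : ℤ} (h : Even i ∨ Even j) :
    H.e (Mat2 1 i 1 j) * H.e (diagM lam0) = 0 := by
  rw [Int.even_iff, Int.even_iff] at h
  rw [diagM_lam0]
  refine H.e_Mat2_mul_e_Mat2_eq_zero 2 ?_
  rw [colS_Mat2, rowS_Mat2]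
  dsimp only
  split_ifs <;> omega

lemma e_Mat2_mul_e_Mat2_two_one_eq_zero {i j : ℤ} (h : Odd i ∨ Odd j) :
    H.e (Mat2 1 i 1 j) * H.e (Mat2 2 1 2 1) = 0 := by
  rw [Int.odd_iff, Int.odd_iff] at h
  refine H.e_Mat2_mul_e_Mat2_eq_zero 1 ?_
  rw [colS_Mat2, rowS_Mat2]
  dsimp only
  split_ifs <;> omega

lemma e_Mat2_three_mul_e_Mat2 (i j : ℤ) :
    H.e (Mat2 1 3 1 3) * H.e (Mat2 1 i 1 j) = H.e (Mat2 1 (i + 2) 1 (j + 2)) := by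
  have h := H.x2_shift i j
  rw [two_mul_Edel] at h
  exact h

lemma e_Mat2_neg_one_mul_e_Mat2 (i j : ℤ) :
    H.e (Mat2 1 (-1) 1 (-1)) * H.e (Mat2 1 i 1 j) = H.e (Mat2 1 (i - 2) 1 (j - 2)) := by
  have h31 : Mat2 3 1 3 1 = Mat2 1 (-1) 1 (-1) := by
    funext x y; simp only [Mat2, Edel]; split_ifs <;> omega
  have h := H.x2inv_shift i j
  rw [two_mul_Edel, h31] at h
  exact h

lemma e_mul_e_colAdd {A : ℤ → ℤ → ℕ} (hA : A ∈ ThetaAff 2 2) (h : ℤ) {m : ℕ}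
    (hm : m ≤ colS A h) (hzero : ∀ u, A u (h + 1) = 0) :
    H.e A * H.e (fun x y => diagM (colS A) x y + m * Edel 2 h (h + 1) x y - m * Edel 2 h h x y)
      = ∑ᶠ t ∈ {t | t ∈ CompInf m ∧ ∀ u, t u ≤ A u h}, H.e (colAdd 2 h t A) := by
  rw [H.lusztig_col_plus h m A hA hm]
  refine finsum_mem_congr rfl fun t _ => ?_
  rw [finprod_eq_one_of_forall_eq_one fun u => by rw [hzero, zero_add, Nat.choose_self],
    Nat.cast_one, one_smul]

lemma e_mul_e_colSub {A : ℤ → ℤ → ℕ} (hA : A ∈ ThetaAff 2 2) (h : ℤ) {m : ℕ}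
    (hm : m ≤ colS A (h + 1)) (hzero : ∀ u, A u h = 0) :
    H.e A * H.e (fun x y => diagM (colS A) x y - m * Edel 2 (h + 1) (h + 1) x y
        + m * Edel 2 (h + 1) h x y)
      = ∑ᶠ t ∈ {t | t ∈ CompInf m ∧ ∀ u, t u ≤ A u (h + 1)}, H.e (colSub 2 h t A) := by
  rw [H.lusztig_col_minus h m A hA hm]
  refine finsum_mem_congr rfl fun t _ => ?_
  rw [finprod_eq_one_of_forall_eq_one fun u => by rw [hzero, zero_add, Nat.choose_self],
    Nat.cast_one, one_smul]

lemma support_Mat2_col_one {a c : ℤ} (ha : Odd a) (hc : Odd c) :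
    support (fun u => Mat2 1 a 1 c u 1) = (fun p => 2 - p) '' {a, c} := by
  rw [Int.odd_iff] at ha hc
  rw [Set.image_pair]
  ext u
  simp only [mem_support, Mat2, Edel, Set.mem_insert_iff, Set.mem_singleton_iff]
  split_ifs <;> omega

lemma e_Mat2_mul_e_Mat2_one_two {a c : ℤ} (ha : Odd a) (hc : Odd c) :
    H.e (Mat2 1 a 1 c) * H.e (Mat2 1 1 1 2)
      = ∑ᶠ p ∈ ({a, c} : Set ℤ), H.e (Mat2 1 (p + 1) 1 (a + c - p)) := by
  have ha' := Int.odd_iff.1 ha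
  have hc' := Int.odd_iff.1 hc
  have key := H.e_mul_e_colAdd (Mat2_mem_ThetaAff 1 a 1 c) 1 (m := 1)
    (by rw [colS_Mat2_one_of_odd ha hc]; decide)
    (fun u => by simp only [Mat2, Edel]; split_ifs <;> omega)
  have hgen : (fun x y => diagM (colS (Mat2 1 a 1 c)) x y + 1 * Edel 2 1 (1 + 1) x y
      - 1 * Edel 2 1 1 x y) = Mat2 1 1 1 2 := by
    rw [colS_Mat2_one_of_odd ha hc]
    funext x y
    simp only [diagM, Mat2, Edel, lam0]
    split_ifs <;> omega
  rw [hgen, setOf_mem_compInf_one_le, support_Mat2_col_one ha hc, Set.image_image,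
    finsum_mem_image fun p _ q _ hpq => by
      simpa [Pi.single_apply] using congrFun hpq (2 - p)] at key
  rw [key]
  refine finsum_mem_congr rfl fun p hp => congrArg H.e ?_
  rcases hp with rfl | rfl <;> funext x y <;> simp only [colAdd, Mat2, Edel, Pi.single_apply] <;>
    split_ifs <;> omega

lemma e_Mat2_mul_e_Mat2_one_zero {a c : ℤ} (ha : Odd a) (hc : Odd c) :
    H.e (Mat2 1 a 1 c) * H.e (Mat2 1 1 1 0)
      = ∑ᶠ p ∈ ({a, c} : Set ℤ), H.e (Mat2 1 (p - 1) 1 (a + c - p)) := by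
  have ha' := Int.odd_iff.1 ha
  have hc' := Int.odd_iff.1 hc
  have key := H.e_mul_e_colSub (Mat2_mem_ThetaAff 1 a 1 c) 0 (m := 1)
    (by rw [colS_Mat2_one_of_odd ha hc]; decide)
    (fun u => by simp only [Mat2, Edel]; split_ifs <;> omega)
  have hgen : (fun x y => diagM (colS (Mat2 1 a 1 c)) x y - 1 * Edel 2 (0 + 1) (0 + 1) x y
      + 1 * Edel 2 (0 + 1) 0 x y) = Mat2 1 1 1 0 := by
    rw [colS_Mat2_one_of_odd ha hc]
    funext x y
    simp only [diagM, Mat2, Edel, lam0]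
    split_ifs <;> omega
  rw [hgen, zero_add, setOf_mem_compInf_one_le, support_Mat2_col_one ha hc, Set.image_image,
    finsum_mem_image fun p _ q _ hpq => by
      simpa [Pi.single_apply] using congrFun hpq (2 - p)] at key
  rw [key]
  refine finsum_mem_congr rfl fun p hp => congrArg H.e ?_
  rcases hp with rfl | rfl <;> funext x y <;> simp only [colSub, Mat2, Edel, Pi.single_apply] <;>
    split_ifs <;> omega

lemma e_Mat2_mul_e_Mat2_one_two_of_ne {a c : ℤ} (ha : Odd a) (hc : Odd c) (hac : a ≠ c) :
    H.e (Mat2 1 a 1 c) * H.e (Mat2 1 1 1 2)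
      = H.e (Mat2 1 (a + 1) 1 c) + H.e (Mat2 1 (c + 1) 1 a) := by
  rw [H.e_Mat2_mul_e_Mat2_one_two ha hc, finsum_mem_pair hac, add_sub_cancel_left,
    add_sub_cancel_right]

lemma e_Mat2_mul_e_Mat2_one_two_self {a : ℤ} (ha : Odd a) :
    H.e (Mat2 1 a 1 a) * H.e (Mat2 1 1 1 2) = H.e (Mat2 1 (a + 1) 1 a) := by
  rw [H.e_Mat2_mul_e_Mat2_one_two ha ha, Set.pair_eq_singleton, finsum_mem_singleton,
    add_sub_cancel_right]

lemma e_Mat2_mul_e_Mat2_one_zero_of_ne {a c : ℤ} (ha : Odd a) (hc : Odd c) (hac : a ≠ c) :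
    H.e (Mat2 1 a 1 c) * H.e (Mat2 1 1 1 0)
      = H.e (Mat2 1 (a - 1) 1 c) + H.e (Mat2 1 (c - 1) 1 a) := by
  rw [H.e_Mat2_mul_e_Mat2_one_zero ha hc, finsum_mem_pair hac, add_sub_cancel_left,
    add_sub_cancel_right]

lemma e_Mat2_mul_e_Mat2_one_zero_self {a : ℤ} (ha : Odd a) :
    H.e (Mat2 1 a 1 a) * H.e (Mat2 1 1 1 0) = H.e (Mat2 1 (a - 1) 1 a) := by
  rw [H.e_Mat2_mul_e_Mat2_one_zero ha ha, Set.pair_eq_singleton, finsum_mem_singleton,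
    add_sub_cancel_right]

lemma e_Mat2_mul_e_Mat2_two_two {a c : ℤ} (ha : Odd a) (hc : Odd c) :
    H.e (Mat2 1 a 1 c) * H.e (Mat2 1 2 1 2) = H.e (Mat2 1 (a + 1) 1 (c + 1)) := by
  have ha' := Int.odd_iff.1 ha
  have hc' := Int.odd_iff.1 hc
  have hcol := colS_Mat2_one_of_odd ha hc
  have key := H.e_mul_e_colAdd (Mat2_mem_ThetaAff 1 a 1 c) 1 (m := 2)
    (by rw [hcol]; decide) (fun u => by simp only [Mat2, Edel]; split_ifs <;> omega)
  have hgen : (fun x y => diagM (colS (Mat2 1 a 1 c)) x y + 2 * Edel 2 1 (1 + 1) x y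
      - 2 * Edel 2 1 1 x y) = Mat2 1 2 1 2 := by
    rw [hcol]
    funext x y
    simp only [diagM, Mat2, Edel, lam0]
    split_ifs <;> omega
  rw [hgen, setOf_mem_compInf_le_of_finsum_eq ((Mat2_mem_ThetaAff 1 a 1 c).2.2.1 1)
    ((congrFun hcol 1).trans (by decide : lam0 1 = 2)), finsum_mem_singleton] at key
  rw [key]
  congr 1
  funext x y
  simp only [colAdd, Mat2, Edel]
  split_ifs <;> omega

lemma e_Mat2_two_two_mul_e_Mat2_two_one :
    H.e (Mat2 1 2 1 2) * H.e (Mat2 2 1 2 1) = H.e (diagM lam0) := by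
  have hcol : colS (Mat2 1 2 1 2) = mu0 := by
    rw [colS_Mat2]; funext y; simp only [mu0]; split_ifs <;> omega
  have key := H.e_mul_e_colSub (Mat2_mem_ThetaAff 1 2 1 2) 1 (m := 2)
    (by rw [hcol]; decide) (fun u => by simp only [Mat2, Edel]; split_ifs <;> omega)
  have hgen : (fun x y => diagM (colS (Mat2 1 2 1 2)) x y - 2 * Edel 2 (1 + 1) (1 + 1) x y
      + 2 * Edel 2 (1 + 1) 1 x y) = Mat2 2 1 2 1 := by
    rw [hcol]
    funext x y
    simp only [diagM, Mat2, Edel, mu0]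
    split_ifs <;> omega
  rw [hgen, setOf_mem_compInf_le_of_finsum_eq ((Mat2_mem_ThetaAff 1 2 1 2).2.2.1 (1 + 1))
    ((congrFun hcol (1 + 1)).trans (by decide : mu0 (1 + 1) = 2)), finsum_mem_singleton] at key
  rw [key]
  congr 1
  funext x y
  simp only [colSub, Mat2, Edel, diagM, lam0]
  split_ifs <;> omega

def piLeft : Fin 4 → S :=
  ![H.e (Mat2 1 1 1 2), H.e (Mat2 1 2 1 3),
    H.e (fun x y => 2 * Edel 2 1 1 x y), H.e (fun x y => 2 * Edel 2 1 2 x y)]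

lemma piLeft_two : H.piLeft 2 = H.e (diagM lam0) := by
  rw [diagM_lam0, ← two_mul_Edel]; rfl

lemma piLeft_three : H.piLeft 3 = H.e (Mat2 1 2 1 2) := by
  rw [← two_mul_Edel]; rfl

abbrev leftSpan : Submodule ℚ S := cornerSpan ℚ (H.e (diagM lam0)) H.piLeft

lemma mul_e_Mat2_one_zero_mem_leftSpan {b : S} (hb : b ∈ H.corner) :
    b * H.e (Mat2 1 1 1 0) ∈ H.leftSpan := by
  have hw := H.e_Mat2_neg_one_mul_e_Mat2 2 3
  rw [show (2 : ℤ) - 2 = 0 by norm_num, show (3 : ℤ) - 2 = 1 by norm_num, Mat2_comm 0] at hw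
  rw [← hw, ← mul_assoc]
  exact mul_mem_cornerSpan _ (mul_mem hb (H.e_Mat2_mem_corner (by decide) (by decide))) 1

lemma e_Mat2_mem_leftSpan_of_odd {a c : ℤ} (ha : Odd a) (hc : Odd c) :
    H.e (Mat2 1 a 1 c) ∈ H.leftSpan := by
  rw [← H.e_Mat2_mul_e_lam0 ha hc, ← piLeft_two]
  exact mul_mem_cornerSpan _ (H.e_Mat2_mem_corner ha hc) 2

lemma e_Mat2_mem_leftSpan_of_even {a c : ℤ} (ha : Even a) (hc : Even c) :
    H.e (Mat2 1 a 1 c) ∈ H.leftSpan := by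
  have h := H.e_Mat2_mul_e_Mat2_two_two (a := a - 1) (c := c - 1) (by grind) (by grind)
  rw [sub_add_cancel, sub_add_cancel, ← piLeft_three] at h
  rw [← h]
  exact mul_mem_cornerSpan _ (H.e_Mat2_mem_corner (by grind) (by grind)) 3

lemma e_Mat2_mem_leftSpan_of_odd_add (k : ℕ) : ∀ a : ℤ, Odd a →
    H.e (Mat2 1 a 1 (a + (2 * k + 1))) ∈ H.leftSpan ∧
      H.e (Mat2 1 a 1 (a - (2 * k + 1))) ∈ H.leftSpan := by
  induction k with
  | zero =>
    intro a ha
    simp only [Nat.cast_zero, mul_zero, zero_add]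
    constructor
    · rw [Mat2_comm, ← H.e_Mat2_mul_e_Mat2_one_two_self ha]
      exact mul_mem_cornerSpan _ (H.e_Mat2_mem_corner ha ha) 0
    · rw [Mat2_comm, ← H.e_Mat2_mul_e_Mat2_one_zero_self ha]
      exact H.mul_e_Mat2_one_zero_mem_leftSpan (H.e_Mat2_mem_corner ha ha)
  | succ k ih =>
    intro a ha
    push_cast
    have hc : Odd (a + (2 * k + 2)) := by grind
    have hc' : Odd (a - (2 * k + 2)) := by grind
    have hπ₁ := H.e_Mat2_mul_e_Mat2_one_two_of_ne ha hc (by omega)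
    have hw := H.e_Mat2_mul_e_Mat2_one_zero_of_ne ha hc' (by omega)
    rw [Mat2_comm (a + 1)] at hπ₁
    rw [Mat2_comm (a - 1)] at hw
    have hmem : H.e (Mat2 1 (a + (2 * k + 2)) 1 (a + 1)) ∈ H.leftSpan := by
      simpa [show a + (2 * k + 2) - (2 * k + 1) = a + 1 by ring] using (ih _ hc).2
    have hmem' : H.e (Mat2 1 (a - (2 * k + 2)) 1 (a - 1)) ∈ H.leftSpan := by
      simpa [show a - (2 * k + 2) + (2 * k + 1) = a - 1 by ring] using (ih _ hc').1
    constructor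
    · rw [Mat2_comm, show a + (2 * (k + 1) + 1) = a + (2 * k + 2) + 1 by ring,
        eq_sub_of_add_eq' hπ₁.symm]
      exact sub_mem (mul_mem_cornerSpan _ (H.e_Mat2_mem_corner ha hc) 0) hmem
    · rw [Mat2_comm, show a - (2 * (k + 1) + 1) = a - (2 * k + 2) - 1 by ring,
        eq_sub_of_add_eq' hw.symm]
      exact sub_mem (H.mul_e_Mat2_one_zero_mem_leftSpan (H.e_Mat2_mem_corner ha hc')) hmem'

lemma e_Mat2_mem_leftSpan_of_odd_of_even {a b : ℤ} (ha : Odd a) (hb : Even b) :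
    H.e (Mat2 1 a 1 b) ∈ H.leftSpan := by
  obtain ⟨k, rfl | rfl⟩ : ∃ k : ℕ, b = a + (2 * k + 1) ∨ b = a - (2 * k + 1) :=
    ⟨(b - a).natAbs / 2, by rw [Int.odd_iff] at ha; rw [Int.even_iff] at hb; omega⟩
  exacts [(H.e_Mat2_mem_leftSpan_of_odd_add k a ha).1, (H.e_Mat2_mem_leftSpan_of_odd_add k a ha).2]

lemma e_Mat2_mem_leftSpan (i j : ℤ) : H.e (Mat2 1 i 1 j) ∈ H.leftSpan := by
  rcases Int.even_or_odd i with hi | hi <;> rcases Int.even_or_odd j with hj | hj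
  · exact H.e_Mat2_mem_leftSpan_of_even hi hj
  · rw [Mat2_comm]
    exact H.e_Mat2_mem_leftSpan_of_odd_of_even hj hi
  · exact H.e_Mat2_mem_leftSpan_of_odd_of_even hi hj
  · exact H.e_Mat2_mem_leftSpan_of_odd hi hj

lemma mem_leftSpan_of_e_lam0_mul {x : S} (hx : H.e (diagM lam0) * x = x) :
    x ∈ H.leftSpan := by
  have hmem : x ∈ (⊤ : Submodule ℚ S).map (LinearMap.mulLeft ℚ (H.e (diagM lam0))) :=
    ⟨x, trivial, hx⟩
  rw [← H.span_eq_top, Submodule.map_span] at hmem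
  refine Submodule.span_le.2 ?_ hmem
  rintro _ ⟨_, ⟨A, hA, rfl⟩, rfl⟩
  by_cases hrow : rowS A = lam0
  · obtain ⟨i, j, rfl⟩ := exists_Mat2_of_rowS_eq_lam0 hA hrow
    simpa only [SetLike.mem_coe, LinearMap.mulLeft_apply, e_lam0_mul_e_Mat2] using
      H.e_Mat2_mem_leftSpan i j
  · rw [SetLike.mem_coe, LinearMap.mulLeft_apply, H.mul_disjoint _ _
      (diagM_lam0 ▸ Mat2_mem_ThetaAff 1 1 1 1) hA (by rw [colS_diagM]; exact Ne.symm hrow)]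
    exact zero_mem _

noncomputable def basis : Module.Basis (ThetaAff 2 2) ℚ S :=
  Module.Basis.mk H.indep (by rw [← Set.image_eq_range, H.span_eq_top])

lemma basis_apply (A : ThetaAff 2 2) : H.basis A = H.e A :=
  Module.Basis.mk_apply _ _ _

noncomputable def coeff (p q : ℤ) : S →ₗ[ℚ] ℚ :=
  (Finsupp.lapply ⟨Mat2 1 p 1 q, Mat2_mem_ThetaAff 1 p 1 q⟩).comp H.basis.repr.toLinearMap

lemma coeff_comm (p q : ℤ) (x : S) : H.coeff p q x = H.coeff q p x := by
  simp only [coeff, Mat2_comm p q]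

lemma coeff_e_Mat2 (a c p q : ℤ) :
    H.coeff p q (H.e (Mat2 1 a 1 c)) = if (a = p ∧ c = q) ∨ (a = q ∧ c = p) then 1 else 0 := by
  classical
  rw [coeff, LinearMap.comp_apply, LinearEquiv.coe_coe,
    ← H.basis_apply ⟨Mat2 1 a 1 c, Mat2_mem_ThetaAff 1 a 1 c⟩, Module.Basis.repr_self,
    Finsupp.lapply_apply, Finsupp.single_apply]
  simp only [Subtype.mk.injEq, Mat2_eq_Mat2_iff]

lemma e_lam0_mul_e_mul_e_lam0_eq_zero_or {A : ℤ → ℤ → ℕ} (hA : A ∈ ThetaAff 2 2) :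
    H.e (diagM lam0) * H.e A * H.e (diagM lam0) = 0 ∨
      ∃ a c, Odd a ∧ Odd c ∧ A = Mat2 1 a 1 c := by
  have hlam : diagM lam0 ∈ ThetaAff 2 2 := diagM_lam0 ▸ Mat2_mem_ThetaAff 1 1 1 1
  by_cases hrow : rowS A = lam0
  · by_cases hcol : colS A = lam0
    · exact Or.inr (exists_odd_Mat2_of_rowS_colS_eq_lam0 hA hrow hcol)
    · rw [mul_assoc, H.mul_disjoint A _ hA hlam (by rwa [rowS_diagM]), mul_zero]
      exact Or.inl rfl
  · rw [H.mul_disjoint _ A hlam hA (by rw [colS_diagM]; exact Ne.symm hrow), zero_mul]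
    exact Or.inl rfl

lemma eq_of_mem_corner_of_forall_e_Mat2 {M : Type*} [AddCommGroup M] [Module ℚ M]
    {L L' : S →ₗ[ℚ] M}
    (h : ∀ a c, Odd a → Odd c → L (H.e (Mat2 1 a 1 c)) = L' (H.e (Mat2 1 a 1 c)))
    {x : S} (hx : x ∈ H.corner) : L x = L' x := by
  have idem := H.isIdempotentElem_e_lam0
  let P : S →ₗ[ℚ] S := LinearMap.mulLeftRight ℚ (H.e (diagM lam0), H.e (diagM lam0))
  have hP : L.comp P = L'.comp P := H.basis.ext fun A => by
    simp only [LinearMap.comp_apply, basis_apply, P, LinearMap.mulLeftRight_apply]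
    rcases H.e_lam0_mul_e_mul_e_lam0_eq_zero_or A.2 with h0 | ⟨a, c, ha, hc, hA⟩
    · rw [h0, map_zero, map_zero]
    · rw [hA, idem.mem_corner_iff_mul_mul.1 (H.e_Mat2_mem_corner ha hc)]
      exact h a c ha hc
  rw [← idem.mem_corner_iff_mul_mul.1 hx]
  exact LinearMap.congr_fun hP x

lemma eq_zero_of_mem_corner_of_forall_coeff {x : S} (hx : x ∈ H.corner)
    (h : ∀ a c, Odd a → Odd c → H.coeff a c x = 0) : x = 0 := by
  refine H.basis.repr.map_eq_zero_iff.1 (Finsupp.ext fun A => ?_)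
  by_cases hA : ∃ a c, Odd a ∧ Odd c ∧ A.1 = Mat2 1 a 1 c
  · obtain ⟨a, c, ha, hc, hAac⟩ := hA
    obtain rfl : A = ⟨Mat2 1 a 1 c, Mat2_mem_ThetaAff 1 a 1 c⟩ := Subtype.ext hAac
    exact h a c ha hc
  · push Not at hA
    refine H.eq_of_mem_corner_of_forall_e_Mat2 (L := (Finsupp.lapply A).comp
      H.basis.repr.toLinearMap) (L' := 0) (fun a c ha hc => ?_) hx
    rw [LinearMap.comp_apply, LinearEquiv.coe_coe,
      ← H.basis_apply ⟨Mat2 1 a 1 c, Mat2_mem_ThetaAff 1 a 1 c⟩, Module.Basis.repr_self,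
      Finsupp.lapply_apply,
      Finsupp.single_eq_of_ne fun h => hA a c ha hc (congrArg Subtype.val h)]
    rfl

lemma coeff_eq_zero_of_forall_coeff_eq {x : S}
    (h : ∀ a c, Odd a → Odd c → H.coeff a c x = H.coeff (a + 2) (c - 2) x)
    {a c : ℤ} (ha : Odd a) (hc : Odd c) : H.coeff a c x = 0 := by
  have horbit : ∀ k : ℕ, H.coeff (a + 2 * k) (c - 2 * k) x = H.coeff a c x := by
    intro k
    induction k with
    | zero => simp
    | succ k ih =>
      rw [← ih, h (a + 2 * k) (c - 2 * k) (by grind) (by grind)]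
      congr 2 <;> push_cast <;> ring
  -- past `N` steps the first index exceeds the second, so the orbit never meets `e_(q,p) = e_(p,q)`
  set N := (c - a).natAbs + 1
  refine (H.basis.repr x).eq_zero_of_injective_of_apply_eq
    (g := fun k => ⟨Mat2 1 (a + 2 * (k + N : ℕ)) 1 (c - 2 * (k + N : ℕ)), Mat2_mem_ThetaAff ..⟩)
    (fun k l hkl => ?_) (fun k => horbit (k + N))
  have := Mat2_eq_Mat2_iff.1 (congrArg Subtype.val hkl)
  omega

lemma coeff_mul_e_Mat2_one_two {x : S} (hx : x ∈ H.corner) {p q : ℤ} (hp : Odd p)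
    (hq : Odd q) : H.coeff p (q + 1) (x * H.e (Mat2 1 1 1 2)) = H.coeff p q x := by
  refine H.eq_of_mem_corner_of_forall_e_Mat2 (L := (H.coeff p (q + 1)).comp
    (LinearMap.mulRight ℚ (H.e (Mat2 1 1 1 2)))) (L' := H.coeff p q) (fun a c ha hc => ?_) hx
  have := Int.odd_iff.1 hp; have := Int.odd_iff.1 hq
  have := Int.odd_iff.1 ha; have := Int.odd_iff.1 hc
  rw [LinearMap.comp_apply, LinearMap.mulRight_apply]
  obtain rfl | hac := eq_or_ne a c
  · rw [H.e_Mat2_mul_e_Mat2_one_two_self ha]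
    simp only [coeff_e_Mat2]
    split_ifs <;> first | rfl | omega
  · rw [H.e_Mat2_mul_e_Mat2_one_two_of_ne ha hc hac, map_add]
    simp only [coeff_e_Mat2]
    split_ifs <;> first | omega | norm_num

lemma coeff_mul_e_Mat2_one_zero {x : S} (hx : x ∈ H.corner) {p q : ℤ} (hp : Odd p)
    (hq : Odd q) : H.coeff p (q + 1) (x * H.e (Mat2 1 1 1 0)) = H.coeff p (q + 2) x := by
  refine H.eq_of_mem_corner_of_forall_e_Mat2 (L := (H.coeff p (q + 1)).comp
    (LinearMap.mulRight ℚ (H.e (Mat2 1 1 1 0)))) (L' := H.coeff p (q + 2))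
    (fun a c ha hc => ?_) hx
  have := Int.odd_iff.1 hp; have := Int.odd_iff.1 hq
  have := Int.odd_iff.1 ha; have := Int.odd_iff.1 hc
  rw [LinearMap.comp_apply, LinearMap.mulRight_apply]
  obtain rfl | hac := eq_or_ne a c
  · rw [H.e_Mat2_mul_e_Mat2_one_zero_self ha]
    simp only [coeff_e_Mat2]
    split_ifs <;> first | rfl | omega
  · rw [H.e_Mat2_mul_e_Mat2_one_zero_of_ne ha hc hac, map_add]
    simp only [coeff_e_Mat2]
    split_ifs <;> first | omega | norm_num

lemma eq_zero_of_mul_add_mul_eq_zero {d₀ d₁ : S} (h₀ : d₀ ∈ H.corner) (h₁ : d₁ ∈ H.corner)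
    (h : d₀ * H.e (Mat2 1 1 1 2) + d₁ * H.e (Mat2 1 1 1 0) = 0) : d₀ = 0 ∧ d₁ = 0 := by
  have hrel : ∀ p q, Odd p → Odd q → H.coeff p q d₀ + H.coeff p (q + 2) d₁ = 0 :=
    fun p q hp hq => by
      simpa only [map_add, map_zero, H.coeff_mul_e_Mat2_one_two h₀ hp hq,
        H.coeff_mul_e_Mat2_one_zero h₁ hp hq] using congrArg (H.coeff p (q + 1)) h
  have hshift : ∀ a c, Odd a → Odd c → H.coeff a c d₁ = H.coeff (a + 2) (c - 2) d₁ :=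
    fun a c ha hc => by
      have h₁ := hrel a (c - 2) ha (by grind)
      have h₂ := hrel (c - 2) a (by grind) ha
      rw [sub_add_cancel] at h₁
      rw [H.coeff_comm (c - 2) a, H.coeff_comm (c - 2) (a + 2)] at h₂
      linarith
  have hd₁ : d₁ = 0 := H.eq_zero_of_mem_corner_of_forall_coeff h₁ fun a c ha hc =>
    H.coeff_eq_zero_of_forall_coeff_eq hshift ha hc
  refine ⟨H.eq_zero_of_mem_corner_of_forall_coeff h₀ fun a c ha hc => ?_, hd₁⟩
  simpa [hd₁] using hrel a c ha hc

lemma eq_zero_of_sum_mul_piLeft_eq_zero {d : Fin 4 → S} (hd : ∀ i, d i ∈ H.corner)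
    (h : ∑ i, d i * H.piLeft i = 0) : d = 0 := by
  have hright : ∀ {b}, b ∈ H.corner → b * H.e (diagM lam0) = b :=
    fun hb => ((Subsemigroup.mem_corner_iff H.isIdempotentElem_e_lam0).1 hb).2
  rw [Fin.sum_univ_four, piLeft_two, piLeft_three] at h
  change d 0 * H.e (Mat2 1 1 1 2) + d 1 * H.e (Mat2 1 2 1 3) + d 2 * H.e (diagM lam0)
    + d 3 * H.e (Mat2 1 2 1 2) = 0 at h
  have h₂ : d 2 = 0 := by
    have := congrArg (· * H.e (diagM lam0)) h
    simp only [add_mul, mul_assoc, zero_mul, hright (hd 2),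
      H.e_Mat2_mul_e_lam0_eq_zero (i := 1) (j := 2) (.inr even_two),
      H.e_Mat2_mul_e_lam0_eq_zero (i := 2) (j := 3) (.inl even_two),
      H.e_Mat2_mul_e_lam0_eq_zero (i := 2) (j := 2) (.inl even_two)] at this
    simpa using this
  rw [h₂, zero_mul, add_zero] at h
  have h₃ : d 3 = 0 := by
    have := congrArg (· * H.e (Mat2 2 1 2 1)) h
    simp only [add_mul, mul_assoc, zero_mul, e_Mat2_two_two_mul_e_Mat2_two_one, hright (hd 3),
      H.e_Mat2_mul_e_Mat2_two_one_eq_zero (i := 1) (j := 2) (.inl odd_one),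
      H.e_Mat2_mul_e_Mat2_two_one_eq_zero (i := 2) (j := 3) (.inr (by decide))] at this
    simpa using this
  have hπ₂ : H.e (Mat2 1 2 1 3) = H.e (Mat2 1 3 1 3) * H.e (Mat2 1 1 1 0) := by
    rw [Mat2_comm 1 0, e_Mat2_three_mul_e_Mat2]
    norm_num
  rw [h₃, zero_mul, add_zero, hπ₂, ← mul_assoc] at h
  obtain ⟨h₀, h₁⟩ := H.eq_zero_of_mul_add_mul_eq_zero (hd 0)
    (mul_mem (hd 1) (H.e_Mat2_mem_corner (by decide) (by decide))) h
  have h₁' : d 1 = 0 := by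
    have hinv := H.e_Mat2_three_mul_e_Mat2 (-1) (-1)
    norm_num only at hinv
    rw [← hright (hd 1), diagM_lam0, ← hinv, ← mul_assoc, h₁, zero_mul]
  funext i
  fin_cases i <;> assumption

lemma eq_of_sum_mul_piLeft_eq {b c : Fin 4 → S} (hb : ∀ i, b i ∈ H.corner)
    (hc : ∀ i, c i ∈ H.corner) (h : ∑ i, b i * H.piLeft i = ∑ i, c i * H.piLeft i) : b = c :=
  sub_eq_zero.1 <| H.eq_zero_of_sum_mul_piLeft_eq_zero (fun i => sub_mem (hb i) (hc i)) <| by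
    simp only [Pi.sub_apply, sub_mul, Finset.sum_sub_distrib, h, sub_self]

def piRight : Fin 4 → S :=
  ![H.e (Mat2 1 1 2 1), H.e (Mat2 2 1 3 1),
    H.e (fun x y => 2 * Edel 2 1 1 x y), H.e (fun x y => 2 * Edel 2 2 1 x y)]

lemma tau_e_lam0 : H.tau (H.e (diagM lam0)) = H.e (diagM lam0) := by
  rw [H.tau_e]
  congr 1
  funext x y
  simp only [diagM, lam0]
  split_ifs <;> omega

lemma tau_mem_corner {b : S} (hb : b ∈ H.corner) : H.tau b ∈ H.corner := by
  rw [H.isIdempotentElem_e_lam0.mem_corner_iff_mul_mul] at hb ⊢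
  conv_rhs => rw [← hb]
  rw [H.tau_mul, H.tau_mul, tau_e_lam0, mul_assoc]

lemma tau_piLeft (i : Fin 4) : H.tau (H.piLeft i) = H.piRight i := by
  fin_cases i <;>
  · dsimp [piLeft, piRight]
    rw [H.tau_e]
    congr 1
    funext x y
    simp only [Mat2, Edel]
    split_ifs <;> omega

lemma exists_sum_piRight_mul {x : S} (hx : x * H.e (diagM lam0) = x) :
    ∃ b : Fin 4 → S, (∀ i, b i ∈ H.corner) ∧ x = ∑ i, H.piRight i * b i := by
  have hτx : H.e (diagM lam0) * H.tau x = H.tau x := by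
    rw [← H.tau_e_lam0, ← H.tau_mul, hx]
  obtain ⟨b, hb, hτ⟩ := H.mem_leftSpan_of_e_lam0_mul hτx
  refine ⟨fun i => H.tau (b i), fun i => H.tau_mem_corner (hb i), ?_⟩
  rw [← H.tau_invol x, hτ, map_sum]
  simp only [H.tau_mul, tau_piLeft]

lemma eq_of_sum_piRight_mul_eq {b c : Fin 4 → S} (hb : ∀ i, b i ∈ H.corner)
    (hc : ∀ i, c i ∈ H.corner) (h : ∑ i, H.piRight i * b i = ∑ i, H.piRight i * c i) :
    b = c := by
  have hτ : ∀ d : Fin 4 → S, H.tau (∑ i, H.piRight i * d i) = ∑ i, H.tau (d i) * H.piLeft i :=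
    fun d => by simp only [map_sum, H.tau_mul, ← tau_piLeft, H.tau_invol]
  have := H.eq_of_sum_mul_piLeft_eq (fun i => H.tau_mem_corner (hb i))
    (fun i => H.tau_mem_corner (hc i)) (by rw [← hτ, ← hτ, h])
  funext i
  simpa only [H.tau_invol] using congrArg H.tau (congrFun this i)

end AffineSchur22

/-- Lemma 4.4 of the paper. In `S△(2,2)` over `ℚ` at `q = 1`, with
`λ = (2,0)` and `B = e_λ S△(2,2) e_λ`, the `B`-module `e_λ S△(2,2) = {x | e_λ x = x}` is
free of rank `4` with basis
`Π₁ = {e_{E△_{1,1}+E△_{1,2}}, e_{E△_{1,2}+E△_{1,3}}, e_{2E△_{1,1}}, e_{2E△_{1,2}}}`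
(every element has a unique expansion `Σᵢ bᵢ πᵢ` with `bᵢ ∈ B`), and similarly
`S△(2,2) e_λ = {x | x e_λ = x}` is free of rank `4` as a `B`-module with basis
`Π₂ = {e_{E△_{1,1}+E△_{2,1}}, e_{E△_{2,1}+E△_{3,1}}, e_{2E△_{1,1}}, e_{2E△_{2,1}}}`. -/
theorem corner_modules_free_rank_four (S : Type) [Ring S] [Algebra ℚ S]
    (H : AffineSchur22 S) :
    (∀ x : S, H.e (diagM lam0) * x = x →
      ∃ b : Fin 4 → S, (∀ i, H.e (diagM lam0) * b i * H.e (diagM lam0) = b i) ∧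
        x = ∑ i, b i * ![H.e (Mat2 1 1 1 2), H.e (Mat2 1 2 1 3),
              H.e (fun x y => 2 * Edel 2 1 1 x y), H.e (fun x y => 2 * Edel 2 1 2 x y)] i) ∧
    (∀ b c : Fin 4 → S, (∀ i, H.e (diagM lam0) * b i * H.e (diagM lam0) = b i) →
      (∀ i, H.e (diagM lam0) * c i * H.e (diagM lam0) = c i) →
      (∑ i, b i * ![H.e (Mat2 1 1 1 2), H.e (Mat2 1 2 1 3),
          H.e (fun x y => 2 * Edel 2 1 1 x y), H.e (fun x y => 2 * Edel 2 1 2 x y)] i) =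
      (∑ i, c i * ![H.e (Mat2 1 1 1 2), H.e (Mat2 1 2 1 3),
          H.e (fun x y => 2 * Edel 2 1 1 x y), H.e (fun x y => 2 * Edel 2 1 2 x y)] i) →
      b = c) ∧
    (∀ x : S, x * H.e (diagM lam0) = x →
      ∃ b : Fin 4 → S, (∀ i, H.e (diagM lam0) * b i * H.e (diagM lam0) = b i) ∧
        x = ∑ i, ![H.e (Mat2 1 1 2 1), H.e (Mat2 2 1 3 1),
              H.e (fun x y => 2 * Edel 2 1 1 x y),
              H.e (fun x y => 2 * Edel 2 2 1 x y)] i * b i) ∧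
    (∀ b c : Fin 4 → S, (∀ i, H.e (diagM lam0) * b i * H.e (diagM lam0) = b i) →
      (∀ i, H.e (diagM lam0) * c i * H.e (diagM lam0) = c i) →
      (∑ i, ![H.e (Mat2 1 1 2 1), H.e (Mat2 2 1 3 1),
          H.e (fun x y => 2 * Edel 2 1 1 x y),
          H.e (fun x y => 2 * Edel 2 2 1 x y)] i * b i) =
      (∑ i, ![H.e (Mat2 1 1 2 1), H.e (Mat2 2 1 3 1),
          H.e (fun x y => 2 * Edel 2 1 1 x y),
          H.e (fun x y => 2 * Edel 2 2 1 x y)] i * c i) →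
      b = c) := by
  have hB : ∀ b : S, H.e (diagM lam0) * b * H.e (diagM lam0) = b ↔ b ∈ H.corner :=
    fun b => H.isIdempotentElem_e_lam0.mem_corner_iff_mul_mul.symm
  refine ⟨fun x hx => ?_, fun b c hb hc h => ?_, fun x hx => ?_, fun b c hb hc h => ?_⟩
  · obtain ⟨b, hb, hxb⟩ := H.mem_leftSpan_of_e_lam0_mul hx
    exact ⟨b, fun i => (hB _).2 (hb i), hxb⟩
  · exact H.eq_of_sum_mul_piLeft_eq (fun i => (hB _).1 (hb i)) (fun i => (hB _).1 (hc i)) h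
  · obtain ⟨b, hb, hxb⟩ := H.exists_sum_piRight_mul hx
    exact ⟨b, fun i => (hB _).2 (hb i), hxb⟩
  · exact H.eq_of_sum_piRight_mul_eq (fun i => (hB _).1 (hb i)) (fun i => (hB _).1 (hc i)) h
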